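/- arXiv:2409.20180 — 5 statements merged into one kernel-verified Lean document; each statement's English description precedes it below -/
import Mathlib

section
/- For all integers m ≥ 1 and 1 ≤ k ≤ n, the following identity of rational numbers holds: ∑_{i=0}^{n-1} [(-1)^{1+i} ∏_{j=0}^{n-1}(j - k - i)] / [i! (n-1-i)! k] · ((k+i)!/i!)^m = (1/k!) ∑_{j=0}^{k-1} (-1)^{k+1-j} ((n+j)!/(n+j-k)!)^{m+1} · C(k-1, j), where the product ∏_{j=0}^{n-1}(j-k-i) is over integers j and C(a,b) denotes the binomial coefficient. -/
/-!
Write `n = l + k`. For `i < l` the product `∏ (t - k - i)` contains the factor `t = k + i` and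
vanishes, so only the indices `i = l + j`, `j < k`, survive. For those the product is
`(-1)^n (n + j)! / j!`, and each surviving term matches the `j`-th term on the right once the
binomial coefficient and `k! = k (k - 1)!` are expanded into factorials.
-/

open Finset

theorem prod_range_sub_natCast {R : Type*} [CommRing R] (a n : ℕ) :
    ∏ t ∈ range n, ((t : R) - a) = (-1) ^ n * a.descFactorial n := by
  calc ∏ t ∈ range n, ((t : R) - a) = ∏ t ∈ range n, ((-1) * ((a : R) - t)) :=
        prod_congr rfl fun _ _ => by ring
    _ = (-1) ^ n * a.descFactorial n := by
        rw [prod_mul_distrib, prod_const, card_range, prod_range_natCast_sub,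
          Nat.descFactorial_eq_prod_range]

theorem Nat.cast_descFactorial_add_eq_div {K : Type*} [Field K] [CharZero K] (n j : ℕ) :
    ((n + j).descFactorial n : K) = (n + j).factorial / j.factorial := by
  rw [eq_div_iff (Nat.cast_ne_zero.mpr j.factorial_ne_zero), ← Nat.cast_mul, mul_comm,
    ← Nat.factorial_mul_descFactorial (Nat.le_add_right n j), Nat.add_sub_cancel_left]

theorem surviving_summand_eq (m k l j : ℕ) (hk : 1 ≤ k) (hj : j < k) :
    ((-1 : ℚ) ^ (1 + (l + j)) * ∏ t ∈ range (l + k), ((t : ℚ) - k - (l + j : ℕ))) /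
        (((l + j).factorial : ℚ) * ((l + k - 1 - (l + j)).factorial : ℚ) * k) *
        (((k + (l + j)).factorial : ℚ) / ((l + j).factorial : ℚ)) ^ m =
      1 / (k.factorial : ℚ) * ((-1 : ℚ) ^ (k + 1 - j) *
        (((l + k + j).factorial : ℚ) / ((l + k + j - k).factorial : ℚ)) ^ (m + 1) *
        ((k - 1).choose j : ℚ)) := by
  have hprod : ∏ t ∈ range (l + k), ((t : ℚ) - k - (l + j : ℕ))
      = (-1) ^ (l + k) * ((l + k + j).factorial / j.factorial) := by
    rw [← Nat.cast_descFactorial_add_eq_div, ← prod_range_sub_natCast]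
    push_cast
    exact prod_congr rfl fun _ _ => by ring
  have hsign : (-1 : ℚ) ^ (1 + (l + j) + (l + k)) = (-1) ^ (k + 1 - j) :=
    neg_one_pow_congr (by simp only [Nat.even_iff]; omega)
  rw [hprod, Nat.cast_choose ℚ (by omega : j ≤ k - 1), show k + (l + j) = l + k + j by ring,
    show l + k - 1 - (l + j) = k - 1 - j by omega, show l + k + j - k = l + j by omega,
    ← hsign, ← Nat.mul_factorial_pred (by omega : k ≠ 0), pow_add, div_pow, div_pow, pow_succ]
  push_cast
  field_simp
  ring

theorem stmt3_general (m k n : ℕ) (hk : 1 ≤ k) (hkn : k ≤ n) :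
    ∑ i ∈ Finset.range n,
        ((-1 : ℚ) ^ (1 + i) * ∏ j ∈ Finset.range n, ((j : ℚ) - k - i)) /
          ((i.factorial : ℚ) * ((n - 1 - i).factorial : ℚ) * k) *
          (((k + i).factorial : ℚ) / (i.factorial : ℚ)) ^ m =
      (1 / (k.factorial : ℚ)) *
        ∑ j ∈ Finset.range k,
          (-1 : ℚ) ^ (k + 1 - j) *
            (((n + j).factorial : ℚ) / ((n + j - k).factorial : ℚ)) ^ (m + 1) *
            ((k - 1).choose j : ℚ) := by
  obtain ⟨l, rfl⟩ := Nat.exists_eq_add_of_le' hkn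
  have hvanish : ∀ i < l, ∏ t ∈ range (l + k), ((t : ℚ) - k - i) = 0 := fun i hi =>
    prod_eq_zero (mem_range.mpr (by omega : k + i < l + k)) (by push_cast; ring)
  rw [sum_range_add, sum_eq_zero fun i hi => by rw [hvanish i (mem_range.mp hi)]; simp, zero_add,
    mul_sum]
  exact sum_congr rfl fun j hj => surviving_summand_eq m k l j hk (mem_range.mp hj)

theorem stmt3 (m k n : ℕ) (hm : 1 ≤ m) (hk : 1 ≤ k) (hkn : k ≤ n) :
    ∑ i ∈ Finset.range n,
        ((-1 : ℚ) ^ (1 + i) * ∏ j ∈ Finset.range n, ((j : ℚ) - k - i)) /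
          ((i.factorial : ℚ) * ((n - 1 - i).factorial : ℚ) * k) *
          (((k + i).factorial : ℚ) / (i.factorial : ℚ)) ^ m =
      (1 / (k.factorial : ℚ)) *
        ∑ j ∈ Finset.range k,
          (-1 : ℚ) ^ (k + 1 - j) *
            (((n + j).factorial : ℚ) / ((n + j - k).factorial : ℚ)) ^ (m + 1) *
            ((k - 1).choose j : ℚ) :=
  stmt3_general m k n hk hkn
end

section
/- Fix integers m ≥ 1 and 1 ≤ k ≤ n. Let β_r (for 0 ≤ r ≤ k(m+1)) be the coefficient of x^r in the real polynomial P(x) = ∏_{i=0}^{k-1} (1 - i/n + x)^{m+1}, and let S(r, j) denote the Stirling number of the second kind. Then (1/k!) ∑_{j=0}^{k-1} (-1)^{k+1-j} C(k-1, j) · (∏_{i=0}^{k-1} (n+j-i))^{m+1} = (n^{k(m+1)}/k) ∑_{r=k-1}^{k(m+1)} n^{-r} β_r S(r, k-1), as an identity of real numbers. -/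
/-!
Write `k = K + 1` and `D = k (m + 1)`. The `K`-th forward difference of `x ↦ x ^ r` at `0` is the
alternating sum `∑ i, (-1)^(K-i) C(K, i) i ^ r`, and it satisfies the Stirling recurrence in `r`,
so it equals `K! S(r, K)`. Summing against the coefficients of `P`, the right-hand side becomes
`n^D / (k · K!) · ∑ i, (-1)^(K-i) C(K, i) P(i / n)`, and
`n^D P(i / n) = (∏ t < k, (n + i - t))^(m + 1)`.
-/

open Polynomial

/-- Stirling numbers of the second kind: `stirling2 n k` is the number of partitions of an
`n`-element set into `k` nonempty blocks, via the standard recurrence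
`S(n+1, k+1) = (k+1) S(n, k+1) + S(n, k)`. -/
def stirling2 : ℕ → ℕ → ℕ
  | 0, 0 => 1
  | 0, _ + 1 => 0
  | _ + 1, 0 => 0
  | n + 1, k + 1 => (k + 1) * stirling2 n (k + 1) + stirling2 n k

open Finset fwdDiff Nat

theorem stirling2_eq_stirlingSecond : stirling2 = stirlingSecond := by
  funext r j
  induction r generalizing j with
  | zero => cases j <;> rfl
  | succ r ih => cases j <;> simp [stirling2, stirlingSecond_succ_succ, ih]

theorem fwdDiff_iter_apply_add {M G : Type*} [AddCommMonoid M] [AddCommGroup G] (h : M)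
    (f : M → G) (j : ℕ) (x : M) :
    (Δ_[h])^[j] f (x + h) = (Δ_[h])^[j] f x + (Δ_[h])^[j + 1] f x := by
  rw [Function.iterate_succ_apply', fwdDiff, add_sub_cancel]

section CommRing

variable {R : Type*} [CommRing R]

theorem fwdDiff_iter_succ_pow_succ_apply_zero (j r : ℕ) :
    (Δ_[1])^[j + 1] (fun x : R ↦ x ^ (r + 1)) 0 =
      (j + 1) * (Δ_[1])^[j] (fun x : R ↦ x ^ r) 1 := by
  simp only [fwdDiff_iter_eq_sum_shift, Int.reduceNeg, nsmul_eq_mul, mul_one, zero_add,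
    zsmul_eq_mul, Int.cast_mul, Int.cast_pow, Int.cast_neg, Int.cast_one, Int.cast_natCast,
    sum_range_succ' _ (j + 1), reduceSubDiff, cast_add, cast_one, tsub_zero, choose_zero_right,
    cast_zero, ne_eq, Nat.add_eq_zero_iff, one_ne_zero, and_false, not_false_eq_true, zero_pow,
    mul_zero, add_zero, mul_sum]
  refine sum_congr rfl fun i _ ↦ ?_
  have hchoose : ((j + 1).choose (i + 1) : R) * (i + 1) = (j + 1) * j.choose i := by
    exact_mod_cast congrArg (Nat.cast (R := R)) (Nat.add_one_mul_choose_eq j i).symm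
  linear_combination (-1) ^ (j - i) * ((i : R) + 1) ^ r * hchoose

theorem fwdDiff_iter_pow_apply_zero (r j : ℕ) :
    (Δ_[1])^[j] (fun x : R ↦ x ^ r) 0 = j ! * stirlingSecond r j := by
  induction r generalizing j with
  | zero =>
    cases j with
    | zero => simp
    | succ j => rw [fwdDiff_iter_pow_eq_zero_of_lt j.succ_pos]; simp
  | succ r ih =>
    cases j with
    | zero => simp
    | succ j =>
      have hshift := fwdDiff_iter_apply_add (1 : R) (fun x ↦ x ^ r) j 0
      rw [zero_add] at hshift
      rw [fwdDiff_iter_succ_pow_succ_apply_zero, hshift, ih, ih,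
        stirlingSecond_succ_succ, factorial_succ]
      push_cast
      ring

theorem factorial_mul_stirlingSecond_eq_sum (r j : ℕ) :
    (j ! * stirlingSecond r j : R) =
      ∑ i ∈ range (j + 1), (-1) ^ (j - i) * j.choose i * (i : R) ^ r := by
  rw [← fwdDiff_iter_pow_apply_zero, fwdDiff_iter_eq_sum_shift]
  simp

theorem factorial_mul_sum_coeff_mul_pow_mul_stirlingSecond (Q : R[X]) {N : ℕ}
    (hN : Q.natDegree < N) (h : R) (j : ℕ) :
    j ! * ∑ r ∈ range N, h ^ r * Q.coeff r * stirlingSecond r j =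
      ∑ i ∈ range (j + 1), (-1) ^ (j - i) * j.choose i * Q.eval (i * h) := by
  calc j ! * ∑ r ∈ range N, h ^ r * Q.coeff r * stirlingSecond r j
      = ∑ r ∈ range N, h ^ r * Q.coeff r * (j ! * stirlingSecond r j) := by
        rw [mul_sum]
        exact sum_congr rfl fun r _ ↦ by ring
    _ = ∑ i ∈ range (j + 1),
          (-1) ^ (j - i) * j.choose i * ∑ r ∈ range N, Q.coeff r * (i * h) ^ r := by
        simp_rw [factorial_mul_stirlingSecond_eq_sum, mul_sum]
        rw [sum_comm]
        exact sum_congr rfl fun i _ ↦ sum_congr rfl fun r _ ↦ by ring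
    _ = _ := by simp_rw [eval_eq_sum_range' hN]

theorem sum_Icc_mul_stirlingSecond_eq_sum_range (f : ℕ → R) (j N : ℕ) :
    ∑ r ∈ Icc j N, f r * stirlingSecond r j =
      ∑ r ∈ range (N + 1), f r * stirlingSecond r j := by
  refine sum_subset (fun r hr ↦ mem_range.2 (Nat.lt_succ_of_le (mem_Icc.1 hr).2))
    fun r hr hr' ↦ ?_
  have hrj : r < j := by
    simp only [mem_range, mem_Icc, not_and_or, not_le] at hr hr'
    omega
  rw [stirlingSecond_eq_zero_of_lt hrj, Nat.cast_zero, mul_zero]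

theorem natDegree_prod_C_add_X_pow_le {ι : Type*} (s : Finset ι) (a : ι → R) (e : ℕ) :
    (∏ i ∈ s, (C (a i) + X) ^ e).natDegree ≤ s.card * e := by
  refine (natDegree_prod_le _ _).trans
    ((sum_le_card_nsmul _ _ e fun i _ ↦ ?_).trans_eq (smul_eq_mul _ _))
  simpa using natDegree_pow_le_of_le e (natDegree_C_add.trans_le (natDegree_X_le (R := R)))

end CommRing

theorem eval_div_prod_C_one_sub_div_add_X_pow {F : Type*} [Field F] {x : F} (hx : x ≠ 0)
    (k e : ℕ) (y : F) :
    (∏ i ∈ range k, (C (1 - i / x) + X) ^ e).eval (y / x) =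
      (∏ i ∈ range k, (x + y - i)) ^ e / x ^ (k * e) := by
  have hpow : x ^ (k * e) = ∏ _i ∈ range k, x ^ e := by
    rw [prod_const, card_range, ← pow_mul, mul_comm]
  rw [hpow, ← prod_pow, ← prod_div_distrib, eval_prod]
  refine prod_congr rfl fun i _ ↦ ?_
  rw [eval_pow, ← div_pow]
  simp only [eval_add, eval_C, eval_X]
  field_simp
  ring

theorem stmt4_general (m k n : ℕ) (hk : 1 ≤ k) (hkn : k ≤ n) :
    (1 / (k.factorial : ℝ)) *
        ∑ j ∈ Finset.range k,
          (-1 : ℝ) ^ (k + 1 - j) * ((k - 1).choose j : ℝ) *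
            (∏ i ∈ Finset.range k, ((n : ℝ) + j - i)) ^ (m + 1) =
      ((n : ℝ) ^ (k * (m + 1)) / k) *
        ∑ r ∈ Finset.Icc (k - 1) (k * (m + 1)),
          ((n : ℝ) ^ r)⁻¹ *
            (∏ i ∈ Finset.range k, (Polynomial.C (1 - (i : ℝ) / n) + Polynomial.X) ^ (m + 1)).coeff r *
            (stirling2 r (k - 1) : ℝ) := by
  obtain ⟨K, rfl⟩ : ∃ K, k = K + 1 := ⟨k - 1, by omega⟩
  have hn : (n : ℝ) ≠ 0 := by exact_mod_cast (by omega : n ≠ 0)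
  have hP := natDegree_prod_C_add_X_pow_le (range (K + 1)) (fun i : ℕ ↦ 1 - (i : ℝ) / n) (m + 1)
  rw [card_range, ← Nat.lt_add_one_iff] at hP
  have hsum := factorial_mul_sum_coeff_mul_pow_mul_stirlingSecond _ hP (1 / n) K
  simp only [mul_one_div, eval_div_prod_C_one_sub_div_add_X_pow hn] at hsum
  simp only [one_div, inv_pow] at hsum
  rw [Nat.add_sub_cancel, stirling2_eq_stirlingSecond, sum_Icc_mul_stirlingSecond_eq_sum_range,
    (eq_div_iff (by positivity)).mpr ((mul_comm _ _).trans hsum), mul_sum, sum_div, mul_sum]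
  refine sum_congr rfl fun j hj ↦ ?_
  rw [show K + 1 + 1 - j = K - j + 2 by grind, pow_add, factorial_succ]
  field_simp
  push_cast
  ring

theorem stmt4 (m k n : ℕ) (hm : 1 ≤ m) (hk : 1 ≤ k) (hkn : k ≤ n) :
    (1 / (k.factorial : ℝ)) *
        ∑ j ∈ Finset.range k,
          (-1 : ℝ) ^ (k + 1 - j) * ((k - 1).choose j : ℝ) *
            (∏ i ∈ Finset.range k, ((n : ℝ) + j - i)) ^ (m + 1) =
      ((n : ℝ) ^ (k * (m + 1)) / k) *
        ∑ r ∈ Finset.Icc (k - 1) (k * (m + 1)),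
          ((n : ℝ) ^ r)⁻¹ *
            (∏ i ∈ Finset.range k, (Polynomial.C (1 - (i : ℝ) / n) + Polynomial.X) ^ (m + 1)).coeff r *
            (stirling2 r (k - 1) : ℝ) :=
  stmt4_general m k n hk hkn
end

section
/- Fix an integer m ≥ 1. Let (k_n) be a sequence of positive integers with k_n ≤ n and k_n²/n → 0, and for each n let β_r^{(n)} be the coefficient of x^r in P(x) = ∏_{i=0}^{k_n-1} (1 - i/n + x)^{m+1}. Then β_r^{(n)}/C(k_n(m+1), r) → 1 as n → ∞, uniformly in r: that is, sup_{0 ≤ r ≤ k_n(m+1)} |β_r^{(n)}/C(k_n(m+1), r) − 1| → 0. -/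
open Filter

theorem stmt6 (m : ℕ) (hm : 1 ≤ m) (k : ℕ → ℕ)
    (hk1 : ∀ n, 1 ≤ k n) (hkn : ∀ n, k n ≤ n)
    (hko : Tendsto (fun n => ((k n : ℝ) ^ 2) / n) atTop (nhds 0)) :
    ∀ ε : ℝ, 0 < ε → ∀ᶠ n in atTop, ∀ r ≤ k n * (m + 1),
      |(∏ i ∈ Finset.range (k n),
            (Polynomial.C (1 - (i : ℝ) / n) + Polynomial.X) ^ (m + 1)).coeff r /
          ((k n * (m + 1)).choose r : ℝ) - 1| < ε := by
  intro ε hε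
  have hε' : (0:ℝ) < ε / (m + 1) := by positivity
  have hev : ∀ᶠ n in atTop, ((k n : ℝ) ^ 2) / n < ε / (m + 1) := by
    have := hko.eventually (gt_mem_nhds hε')
    simpa using this
  filter_upwards [hev] with n hn r hr
  have hn1 : 1 ≤ n := le_trans (hk1 n) (hkn n)
  have hnpos : (0:ℝ) < n := by exact_mod_cast hn1
  set K := k n with hK
  set N := K * (m + 1) with hNdef
  -- rewrite the product as a product over a product finset
  set s : Finset (ℕ × ℕ) := Finset.range K ×ˢ Finset.range (m + 1) with hs
  have hscard : s.card = N := by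
    simp [hs, hNdef]
  have hprod : (∏ i ∈ Finset.range K,
      (Polynomial.C (1 - (i : ℝ) / n) + Polynomial.X) ^ (m + 1))
      = ∏ p ∈ s, (Polynomial.X + Polynomial.C (1 - (p.1 : ℝ) / n)) := by
    rw [hs, Finset.prod_product]
    refine Finset.prod_congr rfl fun i _ => ?_
    simp [Finset.prod_const, add_comm]
  have hrN : r ≤ s.card := by rw [hscard]; exact hr
  have hcoeff := Finset.prod_X_add_C_coeff s (fun p => 1 - (p.1 : ℝ) / n) hrN
  -- bounds on the factor values
  set c : ℝ := 1 - (K : ℝ) / n with hc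
  have hKn : (K : ℝ) / n ≤ 1 := by
    rw [div_le_one hnpos]; exact_mod_cast hkn n
  have hc0 : 0 ≤ c := by rw [hc, sub_nonneg]; exact hKn
  have hc1 : c ≤ 1 := by
    have : (0:ℝ) ≤ (K:ℝ)/n := by positivity
    rw [hc]; linarith
  have hval : ∀ p ∈ s, c ≤ 1 - (p.1 : ℝ) / n ∧ 1 - (p.1 : ℝ) / n ≤ 1 := by
    intro p hp
    rw [hs, Finset.mem_product, Finset.mem_range] at hp
    have h1 : (p.1 : ℝ) / n ≤ (K : ℝ) / n := by
      gcongr; exact_mod_cast hp.1.le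
    have h2 : (0:ℝ) ≤ (p.1 : ℝ) / n := by positivity
    exact ⟨by rw [hc]; linarith, by linarith⟩
  set d := s.card - r with hd
  have hdN : d ≤ N := by rw [hd, hscard]; omega
  have hcard : (s.powersetCard d).card = N.choose r := by
    rw [Finset.card_powersetCard, hscard, hd, hscard, Nat.choose_symm hr]
  -- bounds on each term of the sum
  have hterm : ∀ t ∈ s.powersetCard d,
      c ^ N ≤ ∏ p ∈ t, (1 - (p.1 : ℝ) / n) ∧ ∏ p ∈ t, (1 - (p.1 : ℝ) / n) ≤ 1 := by
    intro t ht
    rw [Finset.mem_powersetCard] at ht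
    constructor
    · calc c ^ N ≤ c ^ d := pow_le_pow_of_le_one hc0 hc1 hdN
        _ = ∏ p ∈ t, c := by rw [Finset.prod_const, ht.2]
        _ ≤ _ := Finset.prod_le_prod (fun p _ => hc0)
              (fun p hp => (hval p (ht.1 hp)).1)
    · exact Finset.prod_le_one
        (fun p hp => le_trans hc0 (hval p (ht.1 hp)).1)
        (fun p hp => (hval p (ht.1 hp)).2)
  set B : ℝ := (∏ i ∈ Finset.range K,
      (Polynomial.C (1 - (i : ℝ) / n) + Polynomial.X) ^ (m + 1)).coeff r with hB
  have hBsum : B = ∑ t ∈ s.powersetCard d, ∏ p ∈ t, (1 - (p.1 : ℝ) / n) := by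
    rw [hB, hprod, hcoeff]
  have hchoosepos : (0:ℝ) < (N.choose r : ℝ) := by
    exact_mod_cast Nat.choose_pos hr
  have hBle : B ≤ (N.choose r : ℝ) := by
    rw [hBsum]
    calc ∑ t ∈ s.powersetCard d, ∏ p ∈ t, (1 - (p.1 : ℝ) / n)
        ≤ ∑ t ∈ s.powersetCard d, 1 :=
          Finset.sum_le_sum (fun t ht => (hterm t ht).2)
      _ = (N.choose r : ℝ) := by rw [Finset.sum_const, hcard]; simp
  have hBge : c ^ N * (N.choose r : ℝ) ≤ B := by
    rw [hBsum]
    calc c ^ N * (N.choose r : ℝ) = ∑ t ∈ s.powersetCard d, c ^ N := by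
          rw [Finset.sum_const, hcard]; ring
      _ ≤ _ := Finset.sum_le_sum (fun t ht => (hterm t ht).1)
  -- Bernoulli estimate
  have hbern : 1 - (N : ℝ) * ((K : ℝ) / n) ≤ c ^ N := by
    have h2 : (-2 : ℝ) ≤ -((K : ℝ) / n) := by linarith
    have := one_add_mul_le_pow h2 N
    rw [hc]
    calc 1 - (N : ℝ) * ((K : ℝ) / n) = 1 + (N : ℝ) * (-((K : ℝ) / n)) := by ring
      _ ≤ (1 + -((K : ℝ) / n)) ^ N := this
      _ = (1 - (K : ℝ) / n) ^ N := by ring_nf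
  have hsmall : (N : ℝ) * ((K : ℝ) / n) < ε := by
    have hNval : (N : ℝ) = (K : ℝ) * ((m : ℝ) + 1) := by
      rw [hNdef]; push_cast; ring
    have hm1 : (0:ℝ) < (m : ℝ) + 1 := by positivity
    calc (N : ℝ) * ((K : ℝ) / n) = ((m : ℝ) + 1) * ((K : ℝ) ^ 2 / n) := by
          rw [hNval]; ring
      _ < ((m : ℝ) + 1) * (ε / ((m : ℝ) + 1)) := by
          exact (mul_lt_mul_iff_right₀ hm1).mpr hn
      _ = ε := by field_simp
  -- conclude
  have h1 : B / (N.choose r : ℝ) ≤ 1 := (div_le_one hchoosepos).mpr hBle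
  have h2 : c ^ N ≤ B / (N.choose r : ℝ) :=
    (le_div_iff₀ hchoosepos).mpr hBge
  rw [abs_sub_lt_iff]
  constructor
  · linarith
  · linarith
end

section
/- Let S(n,k) denote the Stirling number of the second kind. For all integers 2 ≤ k ≤ n, one has 2 · S(n, k-1) ≤ n(n-1) · S(n, k); equivalently S(n,k-1)/S(n,k) ≤ C(n,2). -/
lemma s2_zero_of_lt : ∀ n k : ℕ, n < k → stirling2 n k = 0 := by
  intro n
  induction n with
  | zero =>
    intro k hk
    match k, hk with
    | k + 1, _ => rfl
  | succ n ih =>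
    intro k hk
    match k, hk with
    | k + 1, hk =>
      have h1 : n < k + 1 := by omega
      have h2 : n < k := by omega
      show (k + 1) * stirling2 n (k + 1) + stirling2 n k = 0
      rw [ih _ h1, ih _ h2]; ring

lemma s2_self : ∀ n : ℕ, stirling2 n n = 1 := by
  intro n
  induction n with
  | zero => rfl
  | succ n ih =>
    show (n + 1) * stirling2 n (n + 1) + stirling2 n n = 1
    rw [ih, s2_zero_of_lt n (n + 1) (by omega)]; ring

lemma two_s2_succ : ∀ m : ℕ, 2 * stirling2 (m + 1) m = (m + 1) * m := by
  intro m
  induction m with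
  | zero => rfl
  | succ m ih =>
    show 2 * ((m + 1) * stirling2 (m + 1) (m + 1) + stirling2 (m + 1) m) = (m + 2) * (m + 1)
    rw [s2_self]
    nlinarith [ih]

theorem stmt7 (n k : ℕ) (hk : 2 ≤ k) (hkn : k ≤ n) :
    2 * stirling2 n (k - 1) ≤ n * (n - 1) * stirling2 n k := by
  induction n generalizing k with
  | zero => omega
  | succ n ih =>
    rcases eq_or_lt_of_le hkn with h | h
    · subst h
      rw [s2_self]
      have h2 := two_s2_succ n
      simp only [Nat.add_sub_cancel, mul_one]
      omega
    · have hkn' : k ≤ n := by omega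
      obtain ⟨j, rfl⟩ : ∃ j, k = j + 2 := ⟨k - 2, by omega⟩
      obtain ⟨m, rfl⟩ : ∃ m, n = m + 1 := ⟨n - 1, by omega⟩
      have ih1 : 2 * stirling2 (m + 1) (j + 1) ≤ (m + 1) * m * stirling2 (m + 1) (j + 2) := by
        have := ih (j + 2) hk hkn'
        simpa using this
      have ih2 : 2 * stirling2 (m + 1) j ≤ (m + 1) * m * stirling2 (m + 1) (j + 1) := by
        rcases j with _ | i
        · have h0 : stirling2 (m + 1) 0 = 0 := rfl
          simp [h0]
        · have := ih (i + 2) (by omega) (by omega)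
          simpa using this
      show 2 * ((j + 1) * stirling2 (m + 1) (j + 1) + stirling2 (m + 1) j) ≤
        (m + 2) * (m + 1) * ((j + 2) * stirling2 (m + 1) (j + 2) + stirling2 (m + 1) (j + 1))
      nlinarith [ih1, ih2, Nat.mul_le_mul_left (j + 1) ih1]
end

section
/- Fix an integer m ≥ 1 and let u_m = (m+1)^{m+1}/m^m. Then lim_{k→∞} [(k(m+1))! / (k! (mk+1)!)] · k^{3/2} · u_m^{-k} = √((m+1)/(2π m³)). Equivalently, the Fuss–Catalan number FC_m(k) = (1/(mk+1)) C(mk+k, k) satisfies FC_m(k) ~ √((m+1)/(2π m³)) · u_m^{k} · k^{-3/2} as k → ∞. -/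
/-!
By Stirling's formula, `(a + b)! / (a! b!) ~ √((a + b) / (2π a b)) · (a + b)^(a + b) / (a^a b^b)`
as `a, b → ∞`. For `a = k`, `b = m k` the power factor is exactly `u_m ^ k` and the square root is
`√((m + 1) / (2π m k))`, so the normalised sequence behaves like
`√((m + 1) / (2π m)) · k / (m k + 1) → √((m + 1) / (2π m)) / m`.
-/

open Filter Topology Asymptotics Real
open scoped Nat

noncomputable def stirlingApprox (n : ℕ) : ℝ := √(2 * n * π) * (n / exp 1) ^ n

lemma factorial_isEquivalent_stirlingApprox :
    (fun n ↦ n ! : ℕ → ℝ) ~[atTop] stirlingApprox :=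
  Stirling.factorial_isEquivalent_stirling

lemma stirlingApprox_add_div_mul {p q : ℕ} (hp : p ≠ 0) (hq : q ≠ 0) :
    stirlingApprox (p + q) / (stirlingApprox p * stirlingApprox q) =
      √((p + q) / (2 * π * p * q)) * ((p + q) ^ (p + q) / (p ^ p * q ^ q)) := by
  have hsqrt : √(2 * ↑(p + q) * π) / (√(2 * p * π) * √(2 * q * π)) =
      √((p + q) / (2 * π * p * q)) := by
    rw [← sqrt_mul (by positivity), ← sqrt_div' _ (by positivity)]
    congr 1
    push_cast
    field_simp
  rw [stirlingApprox, stirlingApprox, stirlingApprox, ← hsqrt, div_pow, div_pow, div_pow,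
    pow_add (exp 1)]
  push_cast
  field_simp

lemma add_factorial_div_factorial_mul_factorial_isEquivalent {a b : ℕ → ℕ}
    (ha : Tendsto a atTop atTop) (hb : Tendsto b atTop atTop) :
    (fun k ↦ ((a k + b k)! : ℝ) / ((a k)! * (b k)!)) ~[atTop] fun k ↦
      √((a k + b k) / (2 * π * a k * b k)) *
        ((a k + b k) ^ (a k + b k) / ((a k : ℝ) ^ a k * (b k : ℝ) ^ b k)) := by
  have hab : Tendsto (fun k ↦ a k + b k) atTop atTop := ha.atTop_add_atTop hb
  refine ((factorial_isEquivalent_stirlingApprox.comp_tendsto hab).div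
    ((factorial_isEquivalent_stirlingApprox.comp_tendsto ha).mul
      (factorial_isEquivalent_stirlingApprox.comp_tendsto hb))).congr_right ?_
  filter_upwards [ha.eventually_ne_atTop 0, hb.eventually_ne_atTop 0] with k hak hbk
  exact stirlingApprox_add_div_mul hak hbk

lemma add_mul_pow_div_pow_mul_pow (x : ℝ) (hx : x ≠ 0) (m k : ℕ) :
    (x + m * x) ^ (k + m * k) / (x ^ k * (m * x) ^ (m * k)) =
      ((m + 1) ^ (m + 1) / m ^ m) ^ k := by
  rw [show x + m * x = (m + 1) * x by ring, mul_pow, mul_pow, pow_add x, div_pow, ← pow_mul,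
    ← pow_mul, ← pow_add, mul_comm (m + 1) k, mul_comm m k]
  field_simp
  ring

lemma sqrt_div_mul_rpow_three_halves (m : ℕ) {k : ℕ} (hk : k ≠ 0) :
    √((k + m * k) / (2 * π * k * (m * k))) * (k : ℝ) ^ (3 / 2 : ℝ) =
      √((m + 1) / (2 * π * m)) * k := by
  have hk' : (0 : ℝ) < k := by positivity
  rw [show (3 / 2 : ℝ) = 1 / 2 + 1 by norm_num, rpow_add hk', rpow_one, ← sqrt_eq_rpow,
    ← mul_assoc, ← sqrt_mul (by positivity)]
  congr 2
  field_simp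
  ring

lemma sqrt_div_mul_inv_eq (m : ℕ) :
    √((m + 1) / (2 * π * m)) * (m : ℝ)⁻¹ = √((m + 1) / (2 * π * m ^ 3)) := by
  rw [← sqrt_sq (inv_nonneg.mpr m.cast_nonneg), ← sqrt_mul' _ (sq_nonneg _)]
  congr 1
  field_simp

lemma tendsto_natCast_div_mul_add_one {c : ℝ} (hc : c ≠ 0) :
    Tendsto (fun k : ℕ ↦ (k : ℝ) / (c * k + 1)) atTop (𝓝 c⁻¹) := by
  have h := (tendsto_const_nhds (x := c)).add tendsto_one_div_atTop_nhds_zero_nat |>.inv₀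
    (by simpa using hc)
  rw [add_zero] at h
  refine h.congr' ?_
  filter_upwards [eventually_ne_atTop 0] with k hk
  field_simp

theorem stmt11 (m : ℕ) (hm : 1 ≤ m) :
    Tendsto
      (fun k : ℕ =>
        (((k * (m + 1)).factorial : ℝ) / ((k.factorial : ℝ) * ((m * k + 1).factorial : ℝ))) *
          (k : ℝ) ^ ((3 : ℝ) / 2) *
          ((((m : ℝ) + 1) ^ (m + 1) / (m : ℝ) ^ m) ^ k)⁻¹)
      atTop (nhds (Real.sqrt (((m : ℝ) + 1) / (2 * Real.pi * (m : ℝ) ^ 3)))) := by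
  have hm0 : (m : ℝ) ≠ 0 := by positivity
  have hbinom := add_factorial_div_factorial_mul_factorial_isEquivalent tendsto_id
    (tendsto_id.const_mul_atTop' hm)
  have hequiv := hbinom.mul (IsEquivalent.refl (u := fun k : ℕ ↦
    (k : ℝ) ^ (3 / 2 : ℝ) * ((((m : ℝ) + 1) ^ (m + 1) / (m : ℝ) ^ m) ^ k)⁻¹ / (m * k + 1)))
  have hlim := (tendsto_natCast_div_mul_add_one hm0).const_mul √((m + 1) / (2 * π * m))
  rw [← sqrt_div_mul_inv_eq]
  refine (hequiv.congr_left ?_ |>.congr_right ?_).symm.tendsto_nhds hlim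
  · refine Eventually.of_forall fun k ↦ ?_
    simp only [id, Pi.mul_apply, show k * (m + 1) = k + m * k by ring, Nat.factorial_succ]
    push_cast
    field_simp
  · filter_upwards [eventually_ne_atTop 0] with k hk
    simp only [id, Pi.mul_apply]
    push_cast
    rw [add_mul_pow_div_pow_mul_pow (k : ℝ) (by positivity) m k,
      mul_div_assoc' √((m + 1) / (2 * π * m)), ← sqrt_div_mul_rpow_three_halves m hk]
    field_simp
end
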